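/- arXiv:1909.04255 — 2 statements merged into one kernel-verified Lean document; each statement's English description precedes it below -/
import Mathlib

section
/- Let M ≥ 1 and let p ∈ (0,1)^M with Σ_{i=1}^M p_i = 1. Let S_1, S_2, ... be an i.i.d. sequence of random variables with values in {1,...,M} and P(S_k = i) = p_i, and let X_k ∈ ℕ^M be the count vector [X_k]_i = #{t ≤ k : S_t = i}. For fixed α, β ∈ (0,∞)^M define Y_k = Dirichlet-Multinomial(X_k; α, k) / Dirichlet-Multinomial(X_k; β, k). Then, almost surely, lim_{k→∞} Y_k = (Γ(Σ_i α_i) ∏_i Γ(β_i)) / (Γ(Σ_i β_i) ∏_i Γ(α_i)) · ∏_{i=1}^M p_i^{α_i − β_i}. -/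
/-!
By the strong law of large numbers, `X k i / k → p i` almost surely, so in particular every count
tends to infinity. After the factorials cancel, the ratio is the constant times
`Γ(k + Σβ) / Γ(k + Σα) · ∏ᵢ Γ(Xᵢ + αᵢ) / Γ(Xᵢ + βᵢ)`, and Wendel's limit `Γ(n + a) ~ n ^ a Γ(n)`
(a consequence of Euler's limit formula) makes this asymptotic to
`k ^ (Σβ - Σα) ∏ᵢ Xᵢ ^ (αᵢ - βᵢ) = ∏ᵢ (Xᵢ / k) ^ (αᵢ - βᵢ)`.
-/

open Filter MeasureTheory ProbabilityTheory Topology Asymptotics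
open scoped Finset

/-- The Dirichlet-Multinomial probability mass function with parameters `α ∈ (0,∞)^M`
and `n ∈ ℕ`, evaluated at `x ∈ ℕ^M`. -/
noncomputable def dirichletMultinomial {M : ℕ} (x : Fin M → ℕ) (α : Fin M → ℝ) (n : ℕ) : ℝ :=
  ((n.factorial : ℝ) * Real.Gamma (∑ i, α i) / Real.Gamma ((n : ℝ) + ∑ i, α i)) *
    ∏ i, Real.Gamma ((x i : ℝ) + α i) / (((x i).factorial : ℝ) * Real.Gamma (α i))

namespace Real

theorem Gamma_natCast_add {a : ℝ} (ha : 0 < a) (n : ℕ) :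
    Gamma (n + a) = (∏ j ∈ Finset.range n, (a + j)) * Gamma a := by
  induction n with
  | zero => simp
  | succ n ih =>
    rw [Nat.cast_succ, add_right_comm, Gamma_add_one (by positivity), ih, Finset.prod_range_succ]
    ring

theorem tendsto_Gamma_natCast_add_div_rpow_mul_Gamma {a : ℝ} (ha : 0 < a) :
    Tendsto (fun n : ℕ => Gamma (n + a) / (n ^ a * Gamma n)) atTop (𝓝 1) := by
  have hGa := Gamma_pos_of_pos ha
  have hlim : Tendsto (fun n : ℕ => Gamma a / GammaSeq a n * (n / (n + a))) atTop
      (𝓝 (Gamma a / Gamma a * 1)) :=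
    (tendsto_const_nhds.div (GammaSeq_tendsto_Gamma a) hGa.ne').mul
      (tendsto_natCast_div_add_atTop a)
  rw [div_self hGa.ne', mul_one] at hlim
  refine hlim.congr' ?_
  filter_upwards [eventually_ne_atTop 0] with n hn
  have hn' : (0 : ℝ) < n := by positivity
  have hfac : (n.factorial : ℝ) = n * Gamma n := by
    rw [← Gamma_nat_eq_factorial, Gamma_add_one hn'.ne']
  have hprod : (0 : ℝ) < ∏ j ∈ Finset.range n, (a + j) := Finset.prod_pos fun j _ => by positivity
  have hGn := Gamma_pos_of_pos hn'
  rw [GammaSeq, Finset.prod_range_succ, hfac, Gamma_natCast_add ha]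
  field_simp
  ring

theorem isEquivalent_Gamma_natCast_add {a : ℝ} (ha : 0 < a) :
    (fun n : ℕ => Gamma (n + a)) ~[atTop] fun n => n ^ a * Gamma n :=
  isEquivalent_of_tendsto_one (tendsto_Gamma_natCast_add_div_rpow_mul_Gamma ha)

theorem isEquivalent_Gamma_natCast_add_div {a b : ℝ} (ha : 0 < a) (hb : 0 < b) :
    (fun n : ℕ => Gamma (n + a) / Gamma (n + b)) ~[atTop] fun n => (n : ℝ) ^ (a - b) := by
  refine ((isEquivalent_Gamma_natCast_add ha).div
    (isEquivalent_Gamma_natCast_add hb)).congr_right ?_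
  filter_upwards [eventually_ne_atTop 0] with n hn
  have hn' : (0 : ℝ) < n := by positivity
  have hGn := Gamma_pos_of_pos hn'
  simp only [Pi.div_apply]
  rw [rpow_sub hn']
  field_simp

theorem prod_div_rpow {ι : Type*} (s : Finset ι) {x : ι → ℝ} (hx : ∀ i ∈ s, 0 ≤ x i)
    {y : ℝ} (hy : 0 < y) (c : ι → ℝ) :
    ∏ i ∈ s, (x i / y) ^ c i = y ^ (-∑ i ∈ s, c i) * ∏ i ∈ s, x i ^ c i := by
  rw [rpow_neg hy.le, rpow_sum_of_pos hy, ← Finset.prod_inv_distrib, ← Finset.prod_mul_distrib]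
  refine Finset.prod_congr rfl fun i hi => ?_
  rw [div_rpow (hx i hi) hy.le, div_eq_inv_mul]

end Real

theorem tendsto_atTop_of_tendsto_div_natCast {u : ℕ → ℝ} {c : ℝ} (hc : 0 < c)
    (hu : Tendsto (fun k => u k / k) atTop (𝓝 c)) : Tendsto u atTop atTop := by
  refine (hu.pos_mul_atTop hc tendsto_natCast_atTop_atTop).congr' ?_
  filter_upwards [eventually_ne_atTop 0] with k hk
  field_simp

section

variable {M : ℕ} [NeZero M] {α β : Fin M → ℝ}

theorem dirichletMultinomial_div_dirichletMultinomial (hα : ∀ i, 0 < α i) (hβ : ∀ i, 0 < β i)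
    (x : Fin M → ℕ) (n : ℕ) :
    dirichletMultinomial x α n / dirichletMultinomial x β n =
      (Real.Gamma (∑ i, α i) * ∏ i, Real.Gamma (β i)) /
          (Real.Gamma (∑ i, β i) * ∏ i, Real.Gamma (α i)) *
        (Real.Gamma (n + ∑ i, β i) / Real.Gamma (n + ∑ i, α i) *
          ∏ i, Real.Gamma (x i + α i) / Real.Gamma (x i + β i)) := by
  have hΓ : ∀ {s : ℝ}, 0 < s → Real.Gamma s ≠ 0 := fun hs => (Real.Gamma_pos_of_pos hs).ne'
  have hsα : 0 < ∑ i, α i := Finset.sum_pos (fun i _ => hα i) Finset.univ_nonempty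
  have hsβ : 0 < ∑ i, β i := Finset.sum_pos (fun i _ => hβ i) Finset.univ_nonempty
  have := hΓ hsα
  have := hΓ hsβ
  have := hΓ (add_pos_of_nonneg_of_pos n.cast_nonneg hsα)
  have := hΓ (add_pos_of_nonneg_of_pos n.cast_nonneg hsβ)
  have hΓprod : ∀ {f : Fin M → ℝ}, (∀ i, 0 < f i) → ∏ i, Real.Gamma (f i) ≠ 0 :=
    fun hf => Finset.prod_ne_zero_iff.2 fun i _ => hΓ (hf i)
  have := hΓprod hα
  have := hΓprod hβ
  have := hΓprod fun i => add_pos_of_nonneg_of_pos (x i).cast_nonneg (hα i)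
  have := hΓprod fun i => add_pos_of_nonneg_of_pos (x i).cast_nonneg (hβ i)
  have : ∏ i, ((x i).factorial : ℝ) ≠ 0 := Finset.prod_ne_zero_iff.2 fun i _ => by positivity
  have : (n.factorial : ℝ) ≠ 0 := by positivity
  simp only [dirichletMultinomial, Finset.prod_div_distrib, Finset.prod_mul_distrib]
  field_simp

theorem tendsto_dirichletMultinomial_div {x : ℕ → Fin M → ℕ} {p : Fin M → ℝ} (hp : ∀ i, 0 < p i)
    (hα : ∀ i, 0 < α i) (hβ : ∀ i, 0 < β i)
    (hx : ∀ i, Tendsto (fun k => (x k i : ℝ) / k) atTop (𝓝 (p i))) :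
    Tendsto (fun k => dirichletMultinomial (x k) α k / dirichletMultinomial (x k) β k) atTop
      (𝓝 ((Real.Gamma (∑ i, α i) * ∏ i, Real.Gamma (β i)) /
          (Real.Gamma (∑ i, β i) * ∏ i, Real.Gamma (α i)) * ∏ i, p i ^ (α i - β i))) := by
  set C := (Real.Gamma (∑ i, α i) * ∏ i, Real.Gamma (β i)) /
    (Real.Gamma (∑ i, β i) * ∏ i, Real.Gamma (α i))
  have hsα : 0 < ∑ i, α i := Finset.sum_pos (fun i _ => hα i) Finset.univ_nonempty
  have hsβ : 0 < ∑ i, β i := Finset.sum_pos (fun i _ => hβ i) Finset.univ_nonempty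
  have hx_top : ∀ i, Tendsto (fun k => x k i) atTop atTop := fun i =>
    tendsto_natCast_atTop_iff.1 (tendsto_atTop_of_tendsto_div_natCast (hp i) (hx i))
  have hequiv : (fun k => dirichletMultinomial (x k) α k / dirichletMultinomial (x k) β k)
      ~[atTop] fun k : ℕ => C * ((k : ℝ) ^ (∑ i, β i - ∑ i, α i) *
        ∏ i, (x k i : ℝ) ^ (α i - β i)) := by
    simp_rw [dirichletMultinomial_div_dirichletMultinomial hα hβ]
    exact IsEquivalent.refl.mul ((Real.isEquivalent_Gamma_natCast_add_div hsβ hsα).mul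
      (IsEquivalent.finsetProd fun i _ =>
        (Real.isEquivalent_Gamma_natCast_add_div (hα i) (hβ i)).comp_tendsto (hx_top i)))
  refine hequiv.symm.tendsto_nhds ((tendsto_const_nhds.mul (tendsto_finsetProd _ fun i _ =>
    (hx i).rpow_const (Or.inl (hp i).ne'))).congr' ?_)
  filter_upwards [eventually_ne_atTop 0] with k hk
  rw [Real.prod_div_rpow _ (fun i _ => (x k i).cast_nonneg) (by positivity),
    Finset.sum_sub_distrib, neg_sub]

end

theorem identDistrib_of_measure_preimage_singleton {Ω Ω' E : Type*} [MeasurableSpace Ω]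
    [MeasurableSpace Ω'] [MeasurableSpace E] [Countable E] [MeasurableSingletonClass E]
    {μ : Measure Ω} {ν : Measure Ω'} {X : Ω → E} {Y : Ω' → E} (hX : Measurable X)
    (hY : Measurable Y) (h : ∀ e, μ (X ⁻¹' {e}) = ν (Y ⁻¹' {e})) : IdentDistrib X Y μ ν where
  aemeasurable_fst := hX.aemeasurable
  aemeasurable_snd := hY.aemeasurable
  map_eq := Measure.ext_of_singleton fun e => by
    rw [Measure.map_apply hX (measurableSet_singleton e),
      Measure.map_apply hY (measurableSet_singleton e), h]

theorem Finset.sum_range_indicator_succ_eq_card_filter {α : Type*} (f : ℕ → α) (A : Set α)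
    [DecidablePred (· ∈ A)] (n : ℕ) :
    ∑ t ∈ Finset.range n, A.indicator (1 : α → ℝ) (f (t + 1)) =
      #{t ∈ Finset.Icc 1 n | f t ∈ A} := by
  rw [Finset.range_eq_Ico, Finset.sum_Ico_add' (fun t => A.indicator (1 : α → ℝ) (f t)),
    zero_add, Finset.Ico_add_one_right_eq_Icc]
  simp [Set.indicator_apply, Finset.sum_boole]

theorem tendsto_card_filter_div_ae {Ω E : Type*} [MeasurableSpace Ω] [MeasurableSpace E]
    {P : Measure Ω} [IsFiniteMeasure P] {S : ℕ → Ω → E} (hS : ∀ k, Measurable (S k))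
    (hind : iIndepFun S P) (hident : ∀ k, IdentDistrib (S k) (S 0) P P) {A : Set E}
    [DecidablePred (· ∈ A)] (hA : MeasurableSet A) :
    ∀ᵐ ω ∂P, Tendsto (fun k : ℕ => (#{t ∈ Finset.Icc 1 k | S t ω ∈ A} : ℝ) / k) atTop
      (𝓝 (P.real (S 0 ⁻¹' A))) := by
  have hf : Measurable (A.indicator (1 : E → ℝ)) := measurable_one.indicator hA
  set Z : ℕ → Ω → ℝ := fun t => A.indicator 1 ∘ S (t + 1)
  have hZ0 : Z 0 = (S 1 ⁻¹' A).indicator 1 := funext fun ω => (Set.indicator_comp_right _).symm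
  have hindep : Pairwise fun s t => IndepFun (Z s) (Z t) P := fun s t hst =>
    (hind.indepFun (by omega : s + 1 ≠ t + 1)).comp hf hf
  have hZident : ∀ t, IdentDistrib (Z t) (Z 0) P P := fun t =>
    ((hident (t + 1)).trans (hident 1).symm).comp hf
  have hmean : P[Z 0] = P.real (S 0 ⁻¹' A) := by
    rw [hZ0, integral_indicator_one (hS 1 hA), measureReal_def, measureReal_def,
      (hident 1).measure_mem_eq hA]
  have hint : Integrable (Z 0) P := by
    rw [hZ0]; exact (integrable_const 1).indicator (hS 1 hA)
  filter_upwards [strong_law_ae_real Z hint hindep hZident] with ω hω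
  rw [hmean] at hω
  simpa only [Z, Function.comp_apply, Finset.sum_range_indicator_succ_eq_card_filter (S · ω)]
    using hω

theorem dirichletMultinomial_ratio_tendsto_ae_general
    (M : ℕ) (hM : 1 ≤ M) (p : Fin M → ℝ) (hp : ∀ i, 0 < p i ∧ p i < 1)
    {Ω : Type*} [MeasurableSpace Ω] (P : Measure Ω) [IsProbabilityMeasure P]
    (S : ℕ → Ω → Fin M) (hSmeas : ∀ k, Measurable (S k))
    (hSindep : iIndepFun S P)
    (hSdist : ∀ k i, P {ω | S k ω = i} = ENNReal.ofReal (p i))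
    (X : ℕ → Ω → Fin M → ℕ)
    (hX : ∀ k ω i, X k ω i = ((Finset.Icc 1 k).filter (fun t => S t ω = i)).card)
    (α β : Fin M → ℝ) (hα : ∀ i, 0 < α i) (hβ : ∀ i, 0 < β i)
    (Y : ℕ → Ω → ℝ)
    (hY : ∀ k ω, Y k ω = dirichletMultinomial (X k ω) α k / dirichletMultinomial (X k ω) β k) :
    ∀ᵐ ω ∂P, Tendsto (fun k => Y k ω) atTop
      (nhds ((Real.Gamma (∑ i, α i) * ∏ i, Real.Gamma (β i)) /
          (Real.Gamma (∑ i, β i) * ∏ i, Real.Gamma (α i)) *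
        ∏ i, p i ^ (α i - β i))) := by
  have : NeZero M := ⟨by omega⟩
  have hident : ∀ k, IdentDistrib (S k) (S 0) P P := fun k =>
    identDistrib_of_measure_preimage_singleton (hSmeas k) (hSmeas 0) fun i => by
      simp only [Set.preimage, Set.mem_singleton_iff, hSdist]
  have hfreq : ∀ᵐ ω ∂P, ∀ i, Tendsto (fun k => (X k ω i : ℝ) / k) atTop (𝓝 (p i)) := by
    refine ae_all_iff.2 fun i => ?_
    filter_upwards [tendsto_card_filter_div_ae hSmeas hSindep hident (measurableSet_singleton i)]
      with ω hω
    simpa [hX, measureReal_def, Set.preimage, hSdist, (hp i).1.le] using hω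
  filter_upwards [hfreq] with ω hω
  simp_rw [hY]
  exact tendsto_dirichletMultinomial_div (fun i => (hp i).1) hα hβ hω

/-- For i.i.d. signals with distribution `p` and empirical count vectors `X k`, the ratio
`Y k = DirMult(X k; α, k) / DirMult(X k; β, k)` converges almost surely to
`(Γ(Σα) ∏ Γ(βᵢ))/(Γ(Σβ) ∏ Γ(αᵢ)) · ∏ pᵢ^(αᵢ - βᵢ)`. -/
theorem dirichletMultinomial_ratio_tendsto_ae
    (M : ℕ) (hM : 1 ≤ M) (p : Fin M → ℝ) (hp : ∀ i, 0 < p i ∧ p i < 1) (hpsum : ∑ i, p i = 1)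
    {Ω : Type*} [MeasurableSpace Ω] (P : Measure Ω) [IsProbabilityMeasure P]
    (S : ℕ → Ω → Fin M) (hSmeas : ∀ k, Measurable (S k))
    (hSindep : iIndepFun S P)
    (hSdist : ∀ k i, P {ω | S k ω = i} = ENNReal.ofReal (p i))
    (X : ℕ → Ω → Fin M → ℕ)
    (hX : ∀ k ω i, X k ω i = ((Finset.Icc 1 k).filter (fun t => S t ω = i)).card)
    (α β : Fin M → ℝ) (hα : ∀ i, 0 < α i) (hβ : ∀ i, 0 < β i)
    (Y : ℕ → Ω → ℝ)
    (hY : ∀ k ω, Y k ω = dirichletMultinomial (X k ω) α k / dirichletMultinomial (X k ω) β k) :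
    ∀ᵐ ω ∂P, Tendsto (fun k => Y k ω) atTop
      (nhds ((Real.Gamma (∑ i, α i) * ∏ i, Real.Gamma (β i)) /
          (Real.Gamma (∑ i, β i) * ∏ i, Real.Gamma (α i)) *
        ∏ i, p i ^ (α i - β i))) :=
  dirichletMultinomial_ratio_tendsto_ae_general M hM p hp P S hSmeas hSindep hSdist X hX α β hα hβ Y
    hY
end

section
/- Let M ≥ 1, let Z ∈ ℕ^M be a fixed vector of prior-evidence counts with R = Σ_{i=1}^M Z_i, and let s_1, s_2, ..., s_k be any sequence of symbols in {1,...,M} with count vectors N_t ∈ ℕ^M defined by [N_t]_i = #{τ ≤ t : s_τ = i}. Then the uncertain likelihood ratio satisfies Λ(N_k | Z) = ∏_{t=1}^{k} ℓ(s_t, N_t), where ℓ(s, N_t) = ((Z_s + [N_t]_s)(M + t − 1)) / ((R + t + M − 1)·[N_t]_s). -/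
/-!
Since `Γ(x + 1) = x Γ(x)`, raising one coordinate `α_j` of `α` by one multiplies `Beta(α)` by
`α_j / Σ α`. Observing the symbol `j` at time `t` raises `N_j` by one in both `Beta(Z + N + 1)` and
`Beta(N + 1)`, so it multiplies `Λ(N | Z)` by exactly `ℓ(j, N_t)`; the product telescopes down to
`Λ(0 | Z) = 1`.
-/

/-- The multivariate Beta function `Beta(α) = (∏ i, Γ(α i)) / Γ(∑ i, α i)`. -/
noncomputable def mBeta {M : ℕ} (α : Fin M → ℝ) : ℝ :=
  (∏ i, Real.Gamma (α i)) / Real.Gamma (∑ i, α i)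

/-- The uncertain likelihood ratio for prior-evidence counts `Z ∈ ℕ^M` and
count vector `N ∈ ℕ^M`:
`Λ(N | Z) = Beta(Z + N + 1)·Beta(1) / (Beta(Z + 1)·Beta(N + 1))`. -/
noncomputable def uncertainLikelihoodRatio {M : ℕ} (N Z : Fin M → ℕ) : ℝ :=
  (mBeta (fun i => ((Z i : ℝ) + (N i : ℝ) + 1)) * mBeta (fun _ : Fin M => (1 : ℝ))) /
    (mBeta (fun i => ((Z i : ℝ) + 1)) * mBeta (fun i => ((N i : ℝ) + 1)))

open Finset

section mBeta

variable {M : ℕ} {α : Fin M → ℝ}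

theorem mBeta_pos (hM : 0 < M) (hα : ∀ i, 0 < α i) : 0 < mBeta α :=
  div_pos (prod_pos fun i _ => Real.Gamma_pos_of_pos (hα i))
    (Real.Gamma_pos_of_pos (sum_pos (fun i _ => hα i) ⟨⟨0, hM⟩, mem_univ _⟩))

theorem mBeta_add_single (hα : ∀ i, 0 < α i) (j : Fin M) :
    mBeta (α + Pi.single j 1) = mBeta α * α j / ∑ i, α i := by
  have hprod :
      ∏ i, Real.Gamma ((α + Pi.single j 1 : Fin M → ℝ) i) = α j * ∏ i, Real.Gamma (α i) := by
    rw [Fintype.prod_eq_mul_prod_compl j,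
      Fintype.prod_eq_mul_prod_compl j (fun i => Real.Gamma (α i))]
    have hrest : ∀ i ∈ ({j}ᶜ : Finset (Fin M)),
        Real.Gamma ((α + Pi.single j 1 : Fin M → ℝ) i) = Real.Gamma (α i) := fun i hi => by
      rw [Pi.add_apply, Pi.single_eq_of_ne (by simpa using hi), add_zero]
    rw [prod_congr rfl hrest, Pi.add_apply, Pi.single_eq_same, Real.Gamma_add_one (hα j).ne']
    ring
  have hsum : ∑ i, (α + Pi.single j 1 : Fin M → ℝ) i = (∑ i, α i) + 1 := by
    simp [sum_add_distrib]
  have hsum_pos : 0 < ∑ i, α i := sum_pos (fun i _ => hα i) ⟨j, mem_univ j⟩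
  rw [mBeta, mBeta, hprod, hsum, Real.Gamma_add_one hsum_pos.ne']
  field_simp

end mBeta

theorem uncertainLikelihoodRatio_zero {M : ℕ} (hM : 0 < M) (Z : Fin M → ℕ) :
    uncertainLikelihoodRatio 0 Z = 1 := by
  have hZpos := mBeta_pos hM fun i => (by positivity : (0 : ℝ) < Z i + 1)
  have honepos := mBeta_pos hM fun _ => (zero_lt_one : (0 : ℝ) < 1)
  simp only [uncertainLikelihoodRatio, Pi.zero_apply, Nat.cast_zero, add_zero, zero_add]
  field_simp

theorem uncertainLikelihoodRatio_add_single {M : ℕ} (N Z : Fin M → ℕ) (j : Fin M) :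
    uncertainLikelihoodRatio (N + Pi.single j 1) Z =
      uncertainLikelihoodRatio N Z *
        (((Z j : ℝ) + N j + 1) * (M + ∑ i, (N i : ℝ))) /
          ((∑ i, (Z i : ℝ) + ∑ i, (N i : ℝ) + M) * (N j + 1)) := by
  have hZN : (fun i => (Z i : ℝ) + ((N + Pi.single j 1 : Fin M → ℕ) i : ℝ) + 1) =
      (fun i => (Z i : ℝ) + N i + 1) + Pi.single j 1 := by
    ext i
    simp only [Pi.add_apply, Pi.single_apply, Nat.cast_add, Nat.cast_ite, Nat.cast_one,
      Nat.cast_zero]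
    ring
  have hN : (fun i => ((N + Pi.single j 1 : Fin M → ℕ) i : ℝ) + 1) =
      (fun i => (N i : ℝ) + 1) + Pi.single j 1 := by
    ext i
    simp only [Pi.add_apply, Pi.single_apply, Nat.cast_add, Nat.cast_ite, Nat.cast_one,
      Nat.cast_zero]
    ring
  rw [uncertainLikelihoodRatio, uncertainLikelihoodRatio, hZN, hN,
    mBeta_add_single (fun i => by positivity), mBeta_add_single (fun i => by positivity)]
  have hZpos := mBeta_pos j.pos fun i => (by positivity : (0 : ℝ) < Z i + 1)
  have hNpos := mBeta_pos j.pos fun i => (by positivity : (0 : ℝ) < N i + 1)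
  simp only [sum_add_distrib, sum_const, card_univ, Fintype.card_fin, nsmul_eq_mul, mul_one]
  field_simp
  ring

section countVector

variable {α : Type*} [DecidableEq α]

def countVector (s : ℕ → α) (t : ℕ) (i : α) : ℕ := #{τ ∈ Icc 1 t | s τ = i}

theorem countVector_zero (s : ℕ → α) : countVector s 0 = 0 := by
  ext i; simp [countVector]

theorem countVector_succ (s : ℕ → α) (t : ℕ) :
    countVector s (t + 1) = countVector s t + Pi.single (s (t + 1)) 1 := by
  ext i
  rw [countVector, ← insert_Icc_right_eq_Icc_add_one (Nat.le_add_left 1 t), filter_insert]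
  rcases eq_or_ne (s (t + 1)) i with rfl | hi
  · simp [countVector]
  · simp [countVector, hi, Ne.symm hi]

theorem countVector_succ_self (s : ℕ → α) (t : ℕ) :
    countVector s (t + 1) (s (t + 1)) = countVector s t (s (t + 1)) + 1 := by
  simp [countVector_succ]

theorem sum_countVector [Fintype α] (s : ℕ → α) (t : ℕ) : ∑ i, countVector s t i = t := by
  simp only [countVector]
  rw [← card_eq_sum_card_fiberwise fun τ _ => mem_univ (s τ), Nat.card_Icc, Nat.add_sub_cancel]

end countVector

/-- Iterative representation of the uncertain likelihood ratio: for any sequence of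
symbols `s 1, …, s k` with running count vectors `N t`,
`Λ(N k | Z) = ∏_{t=1}^k ℓ(s t, N t)` where
`ℓ(s, N t) = ((Z_s + [N t]_s)(M + t − 1)) / ((R + t + M − 1)·[N t]_s)` and `R = Σ Z`. -/
theorem uncertainLikelihoodRatio_prod
    (M : ℕ) (hM : 1 ≤ M) (Z : Fin M → ℕ) (R : ℕ) (hR : R = ∑ i, Z i)
    (s : ℕ → Fin M) (N : ℕ → Fin M → ℕ)
    (hN : ∀ t i, N t i = ((Finset.Icc 1 t).filter (fun τ => s τ = i)).card) (k : ℕ) :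
    uncertainLikelihoodRatio (N k) Z =
      ∏ t ∈ Finset.Icc 1 k,
        (((Z (s t) : ℝ) + (N t (s t) : ℝ)) * ((M : ℝ) + (t : ℝ) - 1)) /
          (((R : ℝ) + (t : ℝ) + (M : ℝ) - 1) * (N t (s t) : ℝ)) := by
  obtain rfl : N = countVector s := funext fun t => funext (hN t)
  subst hR
  induction k with
  | zero => simp [countVector_zero, uncertainLikelihoodRatio_zero hM]
  | succ k ih =>
    rw [prod_Icc_succ_top (Nat.le_add_left 1 k), ← ih, countVector_succ_self, countVector_succ,
      uncertainLikelihoodRatio_add_single, ← Nat.cast_sum, ← Nat.cast_sum, sum_countVector]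
    push_cast
    ring
end
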